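/- (Conjugation symmetry of the weight vectors.) Let n ≥ 1 and define p_k := e₋^k((x₁ + i·x₂)^n) for k = 0,…,2n. Then for every integer k with 0 ≤ k ≤ n, p_{2n−k} = (−1)^(n−k) · ((2n−k)!/k!) · p̄_k, where p̄_k denotes the polynomial obtained from p_k by applying complex conjugation to every coefficient. -/
import Mathlib


open MvPolynomial

/-- Directional derivative along `f₀ = (x₂, −x₁, 0)`. -/
noncomputable def D0 : Module.End ℂ (MvPolynomial (Fin 3) ℂ) :=
  (LinearMap.mulLeft ℂ (X 1 : MvPolynomial (Fin 3) ℂ)).comp (pderiv 0).toLinearMap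
    - (LinearMap.mulLeft ℂ (X 0 : MvPolynomial (Fin 3) ℂ)).comp (pderiv 1).toLinearMap

/-- Directional derivative along `f₁ = (x₃, 0, −x₁)`. -/
noncomputable def D1 : Module.End ℂ (MvPolynomial (Fin 3) ℂ) :=
  (LinearMap.mulLeft ℂ (X 2 : MvPolynomial (Fin 3) ℂ)).comp (pderiv 0).toLinearMap
    - (LinearMap.mulLeft ℂ (X 0 : MvPolynomial (Fin 3) ℂ)).comp (pderiv 2).toLinearMap

/-- Directional derivative along `f₂ = (0, x₃, −x₂)`. -/
noncomputable def D2 : Module.End ℂ (MvPolynomial (Fin 3) ℂ) :=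
  (LinearMap.mulLeft ℂ (X 2 : MvPolynomial (Fin 3) ℂ)).comp (pderiv 1).toLinearMap
    - (LinearMap.mulLeft ℂ (X 1 : MvPolynomial (Fin 3) ℂ)).comp (pderiv 2).toLinearMap

/-- The Cartan element `h := 2i·D₀`. -/
noncomputable def hOp : Module.End ℂ (MvPolynomial (Fin 3) ℂ) := (2 * Complex.I) • D0

/-- The raising operator `e₊ := D₁ + i·D₂`. -/
noncomputable def ePlus : Module.End ℂ (MvPolynomial (Fin 3) ℂ) := D1 + Complex.I • D2

/-- The lowering operator `e₋ := −D₁ + i·D₂`. -/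
noncomputable def eMinus : Module.End ℂ (MvPolynomial (Fin 3) ℂ) := -D1 + Complex.I • D2


/-- The weight vectors `p_k := e₋^k ((x₁ + i·x₂)^n)`. -/
noncomputable def pvec (n k : ℕ) : MvPolynomial (Fin 3) ℂ :=
  (eMinus ^ k) ((X 0 + Complex.I • X 1) ^ n)


-- auxiliary
abbrev R3 := MvPolynomial (Fin 3) ℂ
noncomputable def D0d : Derivation ℂ R3 R3 := (X 1 : R3) • pderiv 0 - (X 0 : R3) • pderiv 1
noncomputable def D1d : Derivation ℂ R3 R3 := (X 2 : R3) • pderiv 0 - (X 0 : R3) • pderiv 2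
noncomputable def D2d : Derivation ℂ R3 R3 := (X 2 : R3) • pderiv 1 - (X 1 : R3) • pderiv 2
noncomputable def hD : Derivation ℂ R3 R3 := (2 * Complex.I) • D0d
noncomputable def ePlusD : Derivation ℂ R3 R3 := D1d + Complex.I • D2d
noncomputable def eMinusD : Derivation ℂ R3 R3 := -D1d + Complex.I • D2d

lemma eMinus_apply (p : R3) : eMinus p = eMinusD p := by
  simp [eMinus, eMinusD, D1, D2, D1d, D2d, smul_eq_mul]
lemma ePlus_apply (p : R3) : ePlus p = ePlusD p := by
  simp [ePlus, ePlusD, D1, D2, D1d, D2d, smul_eq_mul]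
lemma hOp_apply (p : R3) : hOp p = hD p := by
  simp [hOp, hD, D0, D0d, smul_eq_mul, smul_sub, mul_smul]

lemma b2 : ⁅hD, eMinusD⁆ = (-2 : ℂ) • eMinusD := by
  apply MvPolynomial.derivation_ext
  intro i
  fin_cases i <;>
    simp [Derivation.commutator_apply, hD, eMinusD, ePlusD, D0d, D1d, D2d, smul_eq_mul,
      pderiv_X, Pi.single_apply, smul_smul] <;> ring_nf <;>
    simp [mul_comm, Complex.I_mul_I, smul_eq_C_mul, map_mul, map_ofNat] <;> ring

lemma b1 : ⁅ePlusD, eMinusD⁆ = hD := by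
  apply MvPolynomial.derivation_ext
  intro i
  fin_cases i <;>
    simp [Derivation.commutator_apply, hD, eMinusD, ePlusD, D0d, D1d, D2d, smul_eq_mul,
      pderiv_X, Pi.single_apply, smul_smul] <;> ring_nf <;>
    simp [mul_comm, Complex.I_mul_I, smul_eq_C_mul, map_mul, map_ofNat] <;> ring

lemma bracket1 (p : R3) : ePlus (eMinus p) = eMinus (ePlus p) + hOp p := by
  have := congrArg (fun D : Derivation ℂ R3 R3 => D p) b1
  simp only [Derivation.commutator_apply] at this
  rw [eMinus_apply, ePlus_apply, ePlus_apply, eMinus_apply, hOp_apply]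
  linear_combination (norm := module) this

lemma bracket2 (p : R3) : hOp (eMinus p) = eMinus (hOp p) - (2 : ℂ) • eMinus p := by
  have := congrArg (fun D : Derivation ℂ R3 R3 => D p) b2
  simp only [Derivation.commutator_apply, Derivation.smul_apply] at this
  rw [eMinus_apply p, hOp_apply p, hOp_apply (eMinusD p), eMinus_apply (hD p)]
  linear_combination (norm := module) this

noncomputable def uP : R3 := X 0 + Complex.I • X 1
noncomputable def ubP : R3 := X 0 - Complex.I • X 1

lemma CI_sq : (C Complex.I : R3) ^ 2 = -1 := by
  rw [← map_pow, Complex.I_sq, map_neg, map_one]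

lemma eMinus_uP : eMinus uP = (-2 : ℂ) • (X 2 : R3) := by
  simp [eMinus, uP, D1, D2, smul_eq_C_mul, smul_smul, pderiv_X, Pi.single_apply]
  ring_nf
  simp only [CI_sq, map_ofNat]
  ring

lemma eMinus_z : eMinus (X 2 : R3) = ubP := by
  simp [eMinus, ubP, D1, D2, smul_eq_C_mul, smul_smul, pderiv_X, Pi.single_apply]
  ring

lemma eMinus_ubP : eMinus ubP = 0 := by
  simp [eMinus, ubP, D1, D2, smul_eq_C_mul, smul_smul, pderiv_X, Pi.single_apply]
  ring_nf
  try simp only [CI_sq, map_ofNat]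
  try ring

lemma ePlus_uP : ePlus uP = 0 := by
  simp [ePlus, uP, D1, D2, smul_eq_C_mul, smul_smul, pderiv_X, Pi.single_apply]
  ring_nf
  try simp only [CI_sq, map_ofNat]
  try ring

lemma hOp_uP : hOp uP = (2 : ℂ) • uP := by
  simp [hOp, uP, D0, smul_eq_C_mul, smul_smul, pderiv_X, Pi.single_apply]
  ring_nf
  simp only [CI_sq, map_ofNat]
  ring

lemma eMinus_mul (p q : R3) : eMinus (p * q) = eMinus p * q + p * eMinus q := by
  rw [eMinus_apply, Derivation.leibniz, eMinus_apply, eMinus_apply, smul_eq_mul, smul_eq_mul]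
  ring

lemma eMinus_one : eMinus (1 : R3) = 0 := by
  rw [eMinus_apply]; exact eMinusD.map_one_eq_zero

lemma hOp_pow (n : ℕ) : hOp (uP ^ n) = (2 * (n : ℂ)) • uP ^ n := by
  cases n with
  | zero => simp [hOp_apply, hD]
  | succ m =>
    rw [hOp_apply, Derivation.leibniz_pow, ← hOp_apply, hOp_uP]
    simp only [Nat.add_sub_cancel]
    rw [smul_eq_mul (a := uP ^ m), mul_smul_comm, ← pow_succ, smul_comm,
      ← Nat.cast_smul_eq_nsmul ℂ, smul_smul]
    try push_cast
    try ring_nf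

lemma ePlus_pow (n : ℕ) : ePlus (uP ^ n) = 0 := by
  cases n with
  | zero => rw [pow_zero, ePlus_apply]; exact ePlusD.map_one_eq_zero
  | succ m =>
    rw [ePlus_apply, Derivation.leibniz_pow, ← ePlus_apply, ePlus_uP]
    simp

lemma pvec_zero (n : ℕ) : pvec n 0 = uP ^ n := by
  simp [pvec, uP]

lemma pvec_succ (n k : ℕ) : pvec n (k + 1) = eMinus (pvec n k) := by
  rw [pvec, pvec, pow_succ', Module.End.mul_apply]

lemma h_pvec (n k : ℕ) : hOp (pvec n k) = (2 * (n : ℂ) - 2 * k) • pvec n k := by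
  induction k with
  | zero => rw [pvec_zero, hOp_pow]; norm_num
  | succ m ih =>
    rw [pvec_succ, bracket2, ih, map_smul, ← sub_smul, ← pvec_succ]
    congr 1
    push_cast
    ring

lemma ePlus_pvec (n m : ℕ) :
    ePlus (pvec n (m + 1)) = (((m : ℂ) + 1) * (2 * (n : ℂ) - m)) • pvec n m := by
  induction m with
  | zero =>
    rw [pvec_succ, bracket1, pvec_zero, ePlus_pow, map_zero, zero_add, ← pvec_zero, h_pvec,
      pvec_zero]
    norm_num
  | succ m ih =>
    rw [pvec_succ, bracket1, ih, map_smul, h_pvec, ← pvec_succ, ← add_smul]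
    congr 1
    push_cast
    ring

lemma key (m : ℕ) (w : R3) :
    (eMinus ^ (m + 2)) (uP * w)
      = uP * (eMinus ^ (m + 2)) w
        + (((m : ℂ) + 2) * (-2)) • ((X 2 : R3) * (eMinus ^ (m + 1)) w)
        + (-(((m : ℂ) + 2) * ((m : ℂ) + 1))) • (ubP * (eMinus ^ m) w) := by
  induction m with
  | zero =>
    have h1 : eMinus (uP * w) = uP * eMinus w + (-2 : ℂ) • ((X 2 : R3) * w) := by
      rw [eMinus_mul, eMinus_uP, smul_mul_assoc]; ring
    have e0 : (eMinus ^ (0 + 2)) (uP * w) = eMinus (eMinus (uP * w)) := by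
      rw [zero_add, pow_succ', Module.End.mul_apply, pow_one]
    have e1 : (eMinus ^ (0 + 2)) w = eMinus (eMinus w) := by
      rw [zero_add, pow_succ', Module.End.mul_apply, pow_one]
    have e2 : (eMinus ^ (0 + 1)) w = eMinus w := by rw [zero_add, pow_one]
    have e5 : (eMinus ^ (0 : ℕ)) w = w := by rw [pow_zero, Module.End.one_apply]
    rw [e0, e1, e2, e5, h1, map_add, map_smul, eMinus_mul, eMinus_mul, eMinus_uP, eMinus_z]
    try simp only [smul_mul_assoc]
    push_cast
    module
  | succ m ih =>
    have h2 := congrArg eMinus ih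
    rw [map_add, map_add, map_smul, map_smul, eMinus_mul, eMinus_mul, eMinus_mul,
      eMinus_uP, eMinus_z, eMinus_ubP] at h2
    have e3 : ∀ j : ℕ, eMinus ((eMinus ^ j) (uP * w)) = (eMinus ^ (j+1)) (uP * w) := by
      intro j; rw [pow_succ', Module.End.mul_apply]
    have e4 : ∀ j : ℕ, eMinus ((eMinus ^ j) w) = (eMinus ^ (j+1)) w := by
      intro j; rw [pow_succ', Module.End.mul_apply]
    rw [e3, e4, e4, e4] at h2
    simp only [zero_mul, zero_add, smul_mul_assoc] at h2
    rw [show m + 1 + 2 = m + 2 + 1 from rfl, h2]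
    try simp only [smul_mul_assoc]
    push_cast
    module

lemma pvec_def (n k : ℕ) : pvec n k = (eMinus ^ k) (uP ^ n) := by rw [pvec, uP]

lemma vanish : ∀ n m : ℕ, pvec n (2 * n + 1 + m) = 0 := by
  intro n
  induction n with
  | zero =>
    intro m
    induction m with
    | zero =>
      rw [pvec_def, pow_zero]
      show (eMinus ^ 1) (1 : R3) = 0
      rw [pow_one, eMinus_one]
    | succ j ihm =>
      have : 2 * 0 + 1 + (j + 1) = (2 * 0 + 1 + j) + 1 := by omega
      rw [this, pvec_succ, ihm, map_zero]
  | succ n ihn =>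
    intro m
    have e1 : 2 * (n + 1) + 1 + m = (2 * n + 1 + m) + 2 := by omega
    rw [e1, pvec_def, pow_succ' uP n, key]
    have v2 : (eMinus ^ (2 * n + 1 + m + 2)) (uP ^ n) = 0 := by
      rw [← pvec_def, show 2 * n + 1 + m + 2 = 2 * n + 1 + (m + 2) by omega, ihn]
    have v1 : (eMinus ^ (2 * n + 1 + m + 1)) (uP ^ n) = 0 := by
      rw [← pvec_def, show 2 * n + 1 + m + 1 = 2 * n + 1 + (m + 1) by omega, ihn]
    have v0 : (eMinus ^ (2 * n + 1 + m)) (uP ^ n) = 0 := by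
      rw [← pvec_def, ihn]
    rw [v2, v1, v0]
    simp

lemma anchor : ∀ n : ℕ, pvec n (2 * n) = ((-1 : ℂ) ^ n * ((2 * n).factorial : ℂ)) • ubP ^ n := by
  intro n
  induction n with
  | zero => simp [pvec_def]
  | succ n ihn =>
    have e1 : 2 * (n + 1) = 2 * n + 2 := by omega
    rw [e1, pvec_def, pow_succ' uP n, key]
    have v2 : (eMinus ^ (2 * n + 2)) (uP ^ n) = 0 := by
      rw [← pvec_def, show 2 * n + 2 = 2 * n + 1 + 1 by omega, vanish]
    have v1 : (eMinus ^ (2 * n + 1)) (uP ^ n) = 0 := by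
      rw [← pvec_def, show 2 * n + 1 = 2 * n + 1 + 0 by omega, vanish]
    rw [v2, v1, ← pvec_def, ihn]
    have hfac : ((2 * n + 2).factorial : ℂ)
        = ((2 * n + 2 : ℕ) : ℂ) * ((2 * n + 1 : ℕ) : ℂ) * ((2 * n).factorial : ℂ) := by
      rw [show 2 * n + 2 = (2 * n + 1) + 1 by omega, Nat.factorial_succ, Nat.factorial_succ]
      push_cast
      ring
    rw [hfac, pow_succ (-1 : ℂ), pow_succ ubP]
    simp only [mul_zero, smul_zero, zero_add, add_zero, zero_smul, smul_zero]
    rw [mul_smul_comm, smul_smul, mul_comm ubP (ubP ^ n)]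
    congr 1
    push_cast
    ring

lemma conj_eMinus (p : R3) :
    MvPolynomial.map (starRingEnd ℂ) (eMinus p) = - ePlus (MvPolynomial.map (starRingEnd ℂ) p) := by
  have h1 : ∀ q : R3, eMinus q
      = -(X 2 * pderiv 0 q - X 0 * pderiv 2 q)
        + Complex.I • (X 2 * pderiv 1 q - X 1 * pderiv 2 q) := by
    intro q; simp [eMinus, D1, D2]
  have h2 : ∀ q : R3, ePlus q
      = (X 2 * pderiv 0 q - X 0 * pderiv 2 q)
        + Complex.I • (X 2 * pderiv 1 q - X 1 * pderiv 2 q) := by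
    intro q; simp [ePlus, D1, D2]
  rw [h1, h2]
  simp only [smul_eq_C_mul, map_add, map_sub, map_neg, map_mul, MvPolynomial.map_C,
    MvPolynomial.map_X, Complex.conj_I, map_neg, pderiv_map]
  ring

lemma conj_uP_pow (n : ℕ) : MvPolynomial.map (starRingEnd ℂ) (uP ^ n) = ubP ^ n := by
  rw [map_pow]
  congr 1
  rw [uP, ubP]
  simp only [smul_eq_C_mul, map_add, map_mul, MvPolynomial.map_C, MvPolynomial.map_X,
    Complex.conj_I, map_neg]
  ring


/-- Conjugation symmetry of the weight vectors:
`p_{2n−k} = (−1)^{n−k} ((2n−k)!/k!) conj(p_k)`. -/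
theorem conjugation_symmetry (n : ℕ) (hn : 1 ≤ n) (k : ℕ) (hk : k ≤ n) :
    pvec n (2 * n - k)
      = ((-1 : ℂ) ^ (n - k) * ((2 * n - k).factorial : ℂ) / (k.factorial : ℂ)) •
          MvPolynomial.map (starRingEnd ℂ) (pvec n k) := by
  induction k with
  | zero =>
    rw [Nat.sub_zero, Nat.sub_zero, pvec_zero, conj_uP_pow, anchor]
    simp [Nat.factorial_zero]
  | succ k ih =>
    have hk' : k ≤ n := by omega
    have IH := ih hk'
    -- the raising identity at exponent 2*n - k
    have hr := ePlus_pvec n (2 * n - (k + 1))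
    rw [show 2 * n - (k + 1) + 1 = 2 * n - k by omega] at hr
    have hc1 : ((2 * n - (k + 1) : ℕ) : ℂ) = 2 * (n : ℂ) - (k : ℂ) - 1 := by
      have h2 := congrArg (fun t : ℕ => (t : ℂ)) (show (2 * n - (k + 1)) + (k + 1) = 2 * n by omega)
      push_cast at h2
      linear_combination h2
    have hc2 : ((2 * n - k : ℕ) : ℂ) = 2 * (n : ℂ) - (k : ℂ) := by
      have h2 := congrArg (fun t : ℕ => (t : ℂ)) (show (2 * n - k) + k = 2 * n by omega)
      push_cast at h2
      linear_combination h2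
    -- conjugation step
    have h6 := conj_eMinus (pvec n k)
    rw [← pvec_succ] at h6
    have h7 : ePlus (MvPolynomial.map (starRingEnd ℂ) (pvec n k))
        = - MvPolynomial.map (starRingEnd ℂ) (pvec n (k + 1)) := by
      rw [h6, neg_neg]
    have h5 : ePlus (pvec n (2 * n - k))
        = (-((-1 : ℂ) ^ (n - k) * ((2 * n - k).factorial : ℂ) / (k.factorial : ℂ)))
            • MvPolynomial.map (starRingEnd ℂ) (pvec n (k + 1)) := by
      rw [IH, map_smul, h7, smul_neg, ← neg_smul]
    have hcomb : ((((2 * n - (k + 1) : ℕ) : ℂ) + 1) * (2 * (n : ℂ) - ((2 * n - (k + 1) : ℕ) : ℂ)))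
          • pvec n (2 * n - (k + 1))
        = (-((-1 : ℂ) ^ (n - k) * ((2 * n - k).factorial : ℂ) / (k.factorial : ℂ)))
            • MvPolynomial.map (starRingEnd ℂ) (pvec n (k + 1)) := by
      rw [← hr, h5]
    have hμ : ((((2 * n - (k + 1) : ℕ) : ℂ) + 1) * (2 * (n : ℂ) - ((2 * n - (k + 1) : ℕ) : ℂ)))
        ≠ 0 := by
      rw [hc1]
      have e1 : 2 * (n : ℂ) - (k : ℂ) - 1 + 1 = ((2 * n - k : ℕ) : ℂ) := by rw [hc2]; ring
      have e2 : 2 * (n : ℂ) - (2 * (n : ℂ) - (k : ℂ) - 1) = (k : ℂ) + 1 := by ring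
      rw [e1, e2]
      exact mul_ne_zero (Nat.cast_ne_zero.mpr (by omega)) (Nat.cast_add_one_ne_zero k)
    refine smul_right_injective (MvPolynomial (Fin 3) ℂ) hμ ?_
    simp only []
    rw [hcomb, smul_smul]
    congr 1
    have hfa : ((2 * n - k).factorial : ℂ)
        = ((2 * n - k : ℕ) : ℂ) * ((2 * n - (k + 1)).factorial : ℂ) := by
      rw [show 2 * n - k = (2 * n - (k + 1)) + 1 by omega, Nat.factorial_succ]
      push_cast
      ring
    have hfb : (((k + 1).factorial : ℕ) : ℂ) = ((k : ℂ) + 1) * (k.factorial : ℂ) := by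
      rw [Nat.factorial_succ]
      push_cast
      ring
    have hK : (k.factorial : ℂ) ≠ 0 := Nat.cast_ne_zero.mpr k.factorial_ne_zero
    have hk1 : ((k : ℂ) + 1) ≠ 0 := Nat.cast_add_one_ne_zero k
    rw [hc1, hfa, hfb, hc2, show n - k = (n - (k + 1)) + 1 by omega, pow_succ]
    field_simp
    ring
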